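/- arXiv:1503.04874 — 2 statements merged into one kernel-verified Lean document; each statement's English description precedes it below -/
import Mathlib

section
/- Let m₀: ℝ → ℂ be 1-periodic, measurable, satisfying the Smith–Barnwell equality |m₀(ξ)|² + |m₀(ξ+1/2)|² = 1 a.e. Suppose ℓ ∈ L²[0,1] is 1-periodic and satisfies ℓ(ξ) conj(m₀(ξ)) + ℓ(ξ+1/2) conj(m₀(ξ+1/2)) = 0 for a.e. ξ. Then there exists a measurable 1-periodic function s such that ℓ(ξ) = e^{2πiξ} s(2ξ) conj(m₀(ξ+1/2)) for a.e. ξ. -/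
/-!
Pointwise, `(ℓ ξ, ℓ (ξ + 1/2))` is orthogonal in `ℂ²` to the unit vector `(m₀ ξ, m₀ (ξ + 1/2))`,
hence equals `λ ξ • (conj (m₀ (ξ + 1/2)), -conj (m₀ ξ))` with
`λ ξ = ℓ ξ * m₀ (ξ + 1/2) - ℓ (ξ + 1/2) * m₀ ξ`. Periodicity of `ℓ` and `m₀` makes `λ`
antiperiodic with antiperiod `1/2`, so `s ξ = e^{-πiξ} λ (ξ/2)` is `1`-periodic. To get `λ`
measurable and exactly antiperiodic, `ℓ` is first replaced by a measurable periodic representative.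
-/

open MeasureTheory Complex Real Function ComplexConjugate

theorem Function.Periodic.ae_eq_of_ae_eq_restrict_Ico {β : Type*} {f g : ℝ → β}
    (hf : Periodic f 1) (hg : Periodic g 1) (h : f =ᵐ[volume.restrict (Set.Ico 0 1)] g) :
    f =ᵐ[volume] g := by
  have hN : volume ({x | f x ≠ g x} ∩ Set.Ico 0 1) = 0 := by
    rwa [Filter.EventuallyEq, ae_iff, Measure.restrict_apply' measurableSet_Ico] at h
  refine measure_mono_null (fun x (hx : f x ≠ g x) => ?_)
    (measure_iUnion_null fun n : ℤ => (measure_preimage_add_right volume (n : ℝ) _).trans hN)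
  have hfract : x + ((-⌊x⌋ : ℤ) : ℝ) = Int.fract x := by push_cast; exact Int.self_sub_floor x
  refine Set.mem_iUnion.2 ⟨-⌊x⌋, ?_, ?_⟩
  · show f _ ≠ g _
    rwa [← mul_one ((-⌊x⌋ : ℤ) : ℝ), hf.int_mul _ x, hg.int_mul _ x]
  · simpa only [hfract] using ⟨Int.fract_nonneg x, Int.fract_lt_one x⟩

theorem Function.Periodic.exists_stronglyMeasurable_ae_eq {β : Type*} [TopologicalSpace β]
    {f : ℝ → β} (hf : Periodic f 1)
    (hfm : AEStronglyMeasurable f (volume.restrict (Set.Ioc 0 1))) :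
    ∃ g : ℝ → β, StronglyMeasurable g ∧ Periodic g 1 ∧ f =ᵐ[volume] g := by
  rw [← Measure.restrict_congr_set Ico_ae_eq_Ioc] at hfm
  obtain ⟨g₀, hg₀, hfg₀⟩ := hfm
  have hg : Periodic (g₀ ∘ Int.fract) 1 := (Int.fract_periodic ℝ).comp g₀
  refine ⟨g₀ ∘ Int.fract, hg₀.comp_measurable measurable_fract, hg,
    hf.ae_eq_of_ae_eq_restrict_Ico hg ?_⟩
  filter_upwards [hfg₀, ae_restrict_mem measurableSet_Ico] with x hx hmem
  rwa [comp_apply, Int.fract_eq_self.2 hmem]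

theorem eq_mul_conj_of_orthogonal {x y a b : ℂ} (hab : ‖a‖ ^ 2 + ‖b‖ ^ 2 = 1)
    (h : x * conj a + y * conj b = 0) : x = (x * b - y * a) * conj b := by
  have hab' : a * conj a + b * conj b = 1 := by
    rw [mul_conj', mul_conj']; exact_mod_cast hab
  linear_combination a * h - x * hab'

theorem Function.Periodic.antiperiodic_mul_shift_sub {R : Type*} [CommRing R] {g m : ℝ → R}
    {c : ℝ} (hg : Periodic g c) (hm : Periodic m c) :
    Antiperiodic (fun ξ => g ξ * m (ξ + c / 2) - g (ξ + c / 2) * m ξ) (c / 2) := by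
  intro ξ
  have hshift : ξ + c / 2 + c / 2 = ξ + c := by ring
  simp only [hshift, hg ξ, hm ξ]
  ring

theorem Function.Antiperiodic.exists_periodic_eq_exp_mul {f : ℝ → ℂ}
    (h : Antiperiodic f (1 / 2)) (hm : Measurable f) :
    ∃ s : ℝ → ℂ, Measurable s ∧ Periodic s 1 ∧
      ∀ ξ : ℝ, f ξ = exp (2 * π * I * ξ) * s (2 * ξ) := by
  -- `e^{-πi} = -1` cancels the sign that antiperiodicity produces.
  refine ⟨fun ξ => exp (-(π * I * ξ)) * f (ξ / 2), by fun_prop, fun ξ => ?_, fun ξ => ?_⟩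
  all_goals dsimp only
  · simp only [add_div, h (ξ / 2)]
    push_cast
    rw [mul_add, neg_add, Complex.exp_add, exp_neg (π * I * 1), mul_one, exp_pi_mul_I]
    ring
  · have hexp : 2 * π * I * ξ + -(π * I * ((2 * ξ : ℝ) : ℂ)) = 0 := by push_cast; ring
    rw [mul_div_cancel_left₀ ξ two_ne_zero, ← mul_assoc, ← Complex.exp_add, hexp,
      Complex.exp_zero, one_mul]

/-- If `m₀` is 1-periodic, measurable and satisfies Smith–Barnwell, and
the 1-periodic `ℓ ∈ L²[0,1]` satisfies `ℓ(ξ)conj(m₀(ξ)) + ℓ(ξ+1/2)conj(m₀(ξ+1/2)) = 0`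
a.e., then `ℓ(ξ) = e^{2πiξ} s(2ξ) conj(m₀(ξ+1/2))` a.e. for some measurable 1-periodic `s`. -/
theorem exists_s_of_orthogonality
    (m₀ : ℝ → ℂ) (hm₀per : ∀ ξ : ℝ, m₀ (ξ + 1) = m₀ ξ) (hm₀meas : Measurable m₀)
    (hSB : ∀ᵐ ξ : ℝ ∂volume, ‖m₀ ξ‖ ^ 2 + ‖m₀ (ξ + 1/2)‖ ^ 2 = 1)
    (ℓ : ℝ → ℂ) (hℓper : ∀ ξ : ℝ, ℓ (ξ + 1) = ℓ ξ)
    (hℓ : MemLp ℓ 2 ((volume : Measure ℝ).restrict (Set.Ioc 0 1)))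
    (horth : ∀ᵐ ξ : ℝ ∂volume,
      ℓ ξ * starRingEnd ℂ (m₀ ξ) + ℓ (ξ + 1/2) * starRingEnd ℂ (m₀ (ξ + 1/2)) = 0) :
    ∃ s : ℝ → ℂ, Measurable s ∧ (∀ ξ : ℝ, s (ξ + 1) = s ξ) ∧
      ∀ᵐ ξ : ℝ ∂volume,
        ℓ ξ = Complex.exp (2 * π * I * ξ) * s (2 * ξ) * starRingEnd ℂ (m₀ (ξ + 1/2)) := by
  obtain ⟨g, hgm, hgper, hℓg⟩ :=
    Periodic.exists_stronglyMeasurable_ae_eq hℓper hℓ.aestronglyMeasurable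
  have hℓg_half : ∀ᵐ ξ : ℝ ∂volume, ℓ (ξ + 1/2) = g (ξ + 1/2) :=
    (measurePreserving_add_right volume (1/2)).quasiMeasurePreserving.ae hℓg
  obtain ⟨s, hsm, hsper, hs⟩ :=
    (Periodic.antiperiodic_mul_shift_sub hgper hm₀per).exists_periodic_eq_exp_mul
      (by have hg_meas : Measurable g := hgm.measurable; fun_prop)
  refine ⟨s, hsm, hsper, ?_⟩
  filter_upwards [hSB, horth, hℓg, hℓg_half] with ξ hSBξ horthξ hℓgξ hℓgξ_half
  rw [hℓgξ, hℓgξ_half] at horthξ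
  rw [hℓgξ, ← hs ξ]
  exact eq_mul_conj_of_orthogonal hSBξ horthξ
end

section
/- If (V_j)_{j∈ℤ} is an increasing sequence of closed subspaces of a Hilbert space H with dense union, and W_j is defined as the orthogonal complement of V_j inside V_{j+1}, then H is the orthogonal direct sum of the W_j together with the intersection ∩_j V_j; in particular if ∩_j V_j = {0}, then H = ⊕_{j∈ℤ} W_j (orthogonal Hilbert space direct sum). -/
open scoped InnerProductSpace

/-!
The pieces `W_j = V_{j+1} ⊓ V_jᗮ` are mutually orthogonal because `W_i ≤ V_j` and
`W_j ≤ V_jᗮ` for `i < j`. For density, take `x` orthogonal to `⋂ V_j` and to every `W_j`.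
Since `P_{j+1} - P_j` is the projection onto `W_j`, the projections `P_j x` onto `V_j` do not
depend on `j`; their common value lies in `⋂ V_j` and is orthogonal to it, hence vanishes.
So `x ⟂ V_j` for all `j`, and `x = 0` because `⋃ V_j` is dense.
-/

namespace Submodule

variable {𝕜 E : Type*} [RCLike 𝕜] [NormedAddCommGroup E] [InnerProductSpace 𝕜 E]

theorem starProjection_eq_of_mem_orthogonal_inf_orthogonal {K₁ K₂ : Submodule 𝕜 E}
    [K₁.HasOrthogonalProjection] [K₂.HasOrthogonalProjection] (h : K₁ ≤ K₂) {x : E}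
    (hx : x ∈ (K₂ ⊓ K₁ᗮ)ᗮ) : K₂.starProjection x = K₁.starProjection x := by
  refine eq_starProjection_of_mem_orthogonal (h (K₁.starProjection_apply_mem x)) ?_
  have hP : K₁.starProjection x ∈ (K₂ ⊓ K₁ᗮ)ᗮ :=
    orthogonal_le inf_le_right (K₁.le_orthogonal_orthogonal (K₁.starProjection_apply_mem x))
  have hmem : x - K₁.starProjection x ∈ K₁ᗮ ⊓ (K₁ᗮ ⊓ K₂)ᗮ :=
    ⟨sub_starProjection_mem_orthogonal x, inf_comm K₂ _ ▸ sub_mem hx hP⟩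
  rwa [inf_orthogonal, sup_orthogonal_inf_of_hasOrthogonalProjection h] at hmem

variable (V : ℤ → Submodule 𝕜 E)

theorem isOrtho_inf_orthogonal_of_lt (hV : Monotone V) {i j : ℤ} (hij : i < j) :
    (V (i + 1) ⊓ (V i)ᗮ) ⟂ (V (j + 1) ⊓ (V j)ᗮ) :=
  (isOrtho_orthogonal_right (V j)).mono (inf_le_left.trans (hV hij)) inf_le_right

theorem isOrtho_iInf_inf_orthogonal (j : ℤ) : (⨅ i, V i) ⟂ (V (j + 1) ⊓ (V j)ᗮ) :=
  (isOrtho_orthogonal_right (V j)).mono (iInf_le V j) inf_le_right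

theorem starProjection_eq_of_forall_mem_orthogonal_inf_orthogonal
    [∀ j, (V j).HasOrthogonalProjection] (hV : Monotone V) {x : E}
    (hx : ∀ j, x ∈ (V (j + 1) ⊓ (V j)ᗮ)ᗮ) (j : ℤ) :
    (V j).starProjection x = (V 0).starProjection x := by
  have hper : Function.Periodic (fun j ↦ (V j).starProjection x) 1 := fun j ↦
    starProjection_eq_of_mem_orthogonal_inf_orthogonal (hV (Int.le_add_one le_rfl)) (hx j)
  simpa using (hper.int_mul j).eq

theorem topologicalClosure_iInf_sup_iSup_inf_orthogonal_eq_top [CompleteSpace E]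
    [∀ j, (V j).HasOrthogonalProjection] (hV : Monotone V)
    (hdense : Dense (⋃ j, (V j : Set E))) :
    ((⨅ j, V j) ⊔ ⨆ j, V (j + 1) ⊓ (V j)ᗮ).topologicalClosure = ⊤ := by
  rw [topologicalClosure_eq_top_iff, eq_bot_iff]
  intro x hx
  rw [← inf_orthogonal, ← iInf_orthogonal, mem_inf, mem_iInf] at hx
  obtain ⟨hxI, hxW⟩ := hx
  have hconst := starProjection_eq_of_forall_mem_orthogonal_inf_orthogonal V hV hxW
  have hPI : (V 0).starProjection x ∈ ⨅ j, V j :=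
    mem_iInf _ |>.mpr fun j ↦ hconst j ▸ (V j).starProjection_apply_mem x
  have hPI' : (V 0).starProjection x ∈ (⨅ j, V j)ᗮ := by
    rw [← sub_sub_cancel x ((V 0).starProjection x)]
    exact sub_mem hxI (orthogonal_le (iInf_le V 0) (sub_starProjection_mem_orthogonal x))
  have hP0 : (V 0).starProjection x = 0 := by
    simpa using (inf_orthogonal_eq_bot (⨅ j, V j)).le ⟨hPI, hPI'⟩
  have hxV : x ∈ (⨆ j, V j)ᗮ := by
    rw [← iInf_orthogonal, mem_iInf]
    exact fun j ↦ (V j).starProjection_apply_eq_zero_iff.mp (hconst j ▸ hP0)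
  refine (hdense.mono ?_).eq_zero_of_mem_orthogonal hxV
  exact Set.iUnion_subset fun j ↦ le_iSup V j

end Submodule

open Submodule in
theorem orthogonal_decomposition_of_increasing_subspaces_general
    {H : Type*} [NormedAddCommGroup H] [InnerProductSpace ℂ H] [CompleteSpace H]
    (V : ℤ → Submodule ℂ H)
    (hclosed : ∀ j : ℤ, IsClosed (V j : Set H))
    (hmono : ∀ j : ℤ, V j ≤ V (j + 1))
    (hdense : Dense (⋃ j : ℤ, (V j : Set H)))
    (W : ℤ → Submodule ℂ H) (hW : ∀ j : ℤ, W j = V (j + 1) ⊓ (V j)ᗮ) :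
    (∀ i j : ℤ, i ≠ j → ∀ f ∈ W i, ∀ g ∈ W j, ⟪f, g⟫_ℂ = 0) ∧
    (∀ j : ℤ, ∀ f ∈ W j, ∀ g ∈ (⨅ i : ℤ, V i), ⟪f, g⟫_ℂ = 0) ∧
    ((⨅ j : ℤ, V j) ⊔ (⨆ j : ℤ, W j)).topologicalClosure = ⊤ ∧
    ((⨅ j : ℤ, V j) = ⊥ → (⨆ j : ℤ, W j).topologicalClosure = ⊤) := by
  obtain rfl : W = fun j ↦ V (j + 1) ⊓ (V j)ᗮ := funext hW
  have hV : Monotone V := monotone_int_of_le_succ hmono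
  have : ∀ j, (V j).HasOrthogonalProjection := fun j ↦
    have := (hclosed j).completeSpace_coe; inferInstance
  have hdense_sum := topologicalClosure_iInf_sup_iSup_inf_orthogonal_eq_top V hV hdense
  refine ⟨fun i j hij ↦ isOrtho_iff_inner_eq.mp ?_, fun j ↦
    isOrtho_iff_inner_eq.mp (isOrtho_iInf_inf_orthogonal V j).symm, hdense_sum, fun hbot ↦ ?_⟩
  · rcases hij.lt_or_gt with hlt | hgt
    · exact isOrtho_inf_orthogonal_of_lt V hV hlt
    · exact (isOrtho_inf_orthogonal_of_lt V hV hgt).symm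
  · simpa [hbot] using hdense_sum

/-- If `(V_j)_{j∈ℤ}` is an increasing sequence of closed subspaces of a
separable Hilbert space `H` with dense union, and `W_j := V_{j+1} ∩ V_j^⊥`, then the
`W_j` are pairwise orthogonal, each is orthogonal to `⋂_j V_j`, and together with
`⋂_j V_j` they span a dense subspace of `H`; in particular if `⋂_j V_j = {0}`, then
`H` is the orthogonal Hilbert direct sum of the `W_j`. -/
theorem orthogonal_decomposition_of_increasing_subspaces
    {H : Type*} [NormedAddCommGroup H] [InnerProductSpace ℂ H] [CompleteSpace H]
    [TopologicalSpace.SeparableSpace H]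
    (V : ℤ → Submodule ℂ H)
    (hclosed : ∀ j : ℤ, IsClosed (V j : Set H))
    (hmono : ∀ j : ℤ, V j ≤ V (j + 1))
    (hdense : Dense (⋃ j : ℤ, (V j : Set H)))
    (W : ℤ → Submodule ℂ H) (hW : ∀ j : ℤ, W j = V (j + 1) ⊓ (V j)ᗮ) :
    (∀ i j : ℤ, i ≠ j → ∀ f ∈ W i, ∀ g ∈ W j, ⟪f, g⟫_ℂ = 0) ∧
    (∀ j : ℤ, ∀ f ∈ W j, ∀ g ∈ (⨅ i : ℤ, V i), ⟪f, g⟫_ℂ = 0) ∧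
    ((⨅ j : ℤ, V j) ⊔ (⨆ j : ℤ, W j)).topologicalClosure = ⊤ ∧
    ((⨅ j : ℤ, V j) = ⊥ → (⨆ j : ℤ, W j).topologicalClosure = ⊤) :=
  orthogonal_decomposition_of_increasing_subspaces_general V hclosed hmono hdense W hW
end
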